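/- arXiv:2206.12796 — 6 statements merged into one kernel-verified Lean document; each statement's English description precedes it below -/
import Mathlib

section
/- Under a subpopulation shift caused only by a shift in the marginal distribution of a nuisance factor Y^i (with identical sample space in both domains), if a classifier f satisfies strict conditional equalized odds in the source domain — i.e., P_S(f(X)=y | A=0, Y=y, Y^i=v) = P_S(f(X)=y | A=1, Y=y, Y^i=v) for all values v of Y^i and all labels y in {0,1} — then f satisfies equalized odds in the target domain: P_T(f(X)=y | A=0, Y=y) = P_T(f(X)=y | A=1, Y=y) for all y, so Δ_odds = 0 in the target. -/
open scoped Classical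

open Finset

/-- Joint probability of an event under the latent variable model with independent
factors: label `Y : Bool`, sensitive attribute `A : Bool`, a nuisance factor `V : 𝒱`,
remaining factors `R`, and observation `X` generated by `gen`. -/
noncomputable def jointP {𝒱 R X : Type} [Fintype 𝒱] [Fintype R] [Fintype X]
    (pY pA : Bool → ℝ) (pV : 𝒱 → ℝ) (pR : R → ℝ)
    (gen : Bool → Bool → 𝒱 → R → X → ℝ)
    (E : Bool → Bool → 𝒱 → R → X → Prop) : ℝ :=
  ∑ y, ∑ a, ∑ v, ∑ r, ∑ x,
    if E y a v r x then pY y * pA a * pV v * pR r * gen y a v r x else 0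

section Aux

variable {𝒱 R X : Type} [Fintype 𝒱] [Fintype R] [Fintype X]
    (pY pA : Bool → ℝ) (pV : 𝒱 → ℝ) (pR : R → ℝ)
    (gen : Bool → Bool → 𝒱 → R → X → ℝ)

lemma jointP_num4 (y a : Bool) (v : 𝒱) (P : X → Prop) :
    jointP pY pA pV pR gen (fun y' a' v' _ x => y' = y ∧ a' = a ∧ v' = v ∧ P x)
      = pY y * pA a * pV v * ∑ r, ∑ x, if P x then pR r * gen y a v r x else 0 := by
  rw [jointP]
  refine Eq.trans (Fintype.sum_eq_single y (fun b hb => Finset.sum_eq_zero fun a' _ =>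
    Finset.sum_eq_zero fun v' _ => Finset.sum_eq_zero fun r _ =>
    Finset.sum_eq_zero fun x _ => if_neg (fun hc => hb hc.1))) ?_
  refine Eq.trans (Fintype.sum_eq_single a (fun b hb =>
    Finset.sum_eq_zero fun v' _ => Finset.sum_eq_zero fun r _ =>
    Finset.sum_eq_zero fun x _ => if_neg (fun hc => hb hc.2.1))) ?_
  refine Eq.trans (Fintype.sum_eq_single v (fun b hb =>
    Finset.sum_eq_zero fun r _ =>
    Finset.sum_eq_zero fun x _ => if_neg (fun hc => hb hc.2.2.1))) ?_
  simp only [Finset.mul_sum]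
  refine Finset.sum_congr rfl fun r _ => Finset.sum_congr rfl fun x _ => ?_
  by_cases h : P x
  · rw [if_pos (by simp [h]), if_pos h]; ring
  · rw [if_neg (by simp [h]), if_neg h, mul_zero]

lemma jointP_den3 (y a : Bool) (v : 𝒱)
    (hR1 : ∑ r, pR r = 1) (hgen1 : ∀ y a v r, ∑ x, gen y a v r x = 1) :
    jointP pY pA pV pR gen (fun y' a' v' _ _ => y' = y ∧ a' = a ∧ v' = v)
      = pY y * pA a * pV v := by
  rw [jointP]
  refine Eq.trans (Fintype.sum_eq_single y (fun b hb => Finset.sum_eq_zero fun a' _ =>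
    Finset.sum_eq_zero fun v' _ => Finset.sum_eq_zero fun r _ =>
    Finset.sum_eq_zero fun x _ => if_neg (fun hc => hb hc.1))) ?_
  refine Eq.trans (Fintype.sum_eq_single a (fun b hb =>
    Finset.sum_eq_zero fun v' _ => Finset.sum_eq_zero fun r _ =>
    Finset.sum_eq_zero fun x _ => if_neg (fun hc => hb hc.2.1))) ?_
  refine Eq.trans (Fintype.sum_eq_single v (fun b hb =>
    Finset.sum_eq_zero fun r _ =>
    Finset.sum_eq_zero fun x _ => if_neg (fun hc => hb hc.2.2))) ?_
  have : ∀ r x, (@ite ℝ (y = y ∧ a = a ∧ v = v) (Classical.propDecidable _)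
        (pY y * pA a * pV v * pR r * gen y a v r x) 0)
      = pY y * pA a * pV v * (pR r * gen y a v r x) := by
    intro r x; rw [if_pos (by simp)]; ring
  refine Eq.trans (Finset.sum_congr rfl fun r _ => Finset.sum_congr rfl fun x _ => this r x) ?_
  simp only [← Finset.mul_sum, hgen1, mul_one, hR1]

lemma jointP_num3 (y a : Bool) (P : X → Prop) :
    jointP pY pA pV pR gen (fun y' a' _ _ x => y' = y ∧ a' = a ∧ P x)
      = pY y * pA a * ∑ v, pV v * ∑ r, ∑ x, if P x then pR r * gen y a v r x else 0 := by
  rw [jointP]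
  refine Eq.trans (Fintype.sum_eq_single y (fun b hb => Finset.sum_eq_zero fun a' _ =>
    Finset.sum_eq_zero fun v' _ => Finset.sum_eq_zero fun r _ =>
    Finset.sum_eq_zero fun x _ => if_neg (fun hc => hb hc.1))) ?_
  refine Eq.trans (Fintype.sum_eq_single a (fun b hb =>
    Finset.sum_eq_zero fun v' _ => Finset.sum_eq_zero fun r _ =>
    Finset.sum_eq_zero fun x _ => if_neg (fun hc => hb hc.2.1))) ?_
  simp only [Finset.mul_sum]
  refine Finset.sum_congr rfl fun v _ => Finset.sum_congr rfl fun r _ =>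
    Finset.sum_congr rfl fun x _ => ?_
  by_cases h : P x
  · rw [if_pos (by simp [h]), if_pos h]; ring
  · rw [if_neg (by simp [h]), if_neg h]; ring

lemma jointP_den2 (y a : Bool)
    (hR1 : ∑ r, pR r = 1) (hgen1 : ∀ y a v r, ∑ x, gen y a v r x = 1) :
    jointP pY pA pV pR gen (fun y' a' _ _ _ => y' = y ∧ a' = a)
      = pY y * pA a * ∑ v, pV v := by
  rw [jointP]
  refine Eq.trans (Fintype.sum_eq_single y (fun b hb => Finset.sum_eq_zero fun a' _ =>
    Finset.sum_eq_zero fun v' _ => Finset.sum_eq_zero fun r _ =>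
    Finset.sum_eq_zero fun x _ => if_neg (fun hc => hb hc.1))) ?_
  refine Eq.trans (Fintype.sum_eq_single a (fun b hb =>
    Finset.sum_eq_zero fun v' _ => Finset.sum_eq_zero fun r _ =>
    Finset.sum_eq_zero fun x _ => if_neg (fun hc => hb hc.2))) ?_
  have : ∀ (v : 𝒱) (r : R) (x : X),
      (@ite ℝ (y = y ∧ a = a) (Classical.propDecidable _)
        (pY y * pA a * pV v * pR r * gen y a v r x) 0)
      = pY y * pA a * (pV v * (pR r * gen y a v r x)) := by
    intro v r x; rw [if_pos (by simp)]; ring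
  refine Eq.trans (Finset.sum_congr rfl fun v _ => Finset.sum_congr rfl fun r _ =>
    Finset.sum_congr rfl fun x _ => this v r x) ?_
  simp only [← Finset.mul_sum, hgen1, mul_one, hR1]

end Aux

/-- Under a subpopulation shift of the nuisance factor `V` only
(common sample space `𝒱`, shared generative model and all other factor marginals),
if the classifier `f` satisfies strict conditional equalized odds in the source
domain under every value `v` of the nuisance factor, then it satisfies equalized
odds in the target domain, and `Δ_odds = 0` there. -/
theorem equalized_odds_transfers_under_nuisance_subpopulation_shift
    {𝒱 R X : Type} [Fintype 𝒱] [Fintype R] [Fintype X]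
    (pY pA : Bool → ℝ) (pVS pVT : 𝒱 → ℝ) (pR : R → ℝ)
    (gen : Bool → Bool → 𝒱 → R → X → ℝ) (f : X → Bool)
    (hY1 : ∑ y, pY y = 1) (hA1 : ∑ a, pA a = 1)
    (hVS1 : ∑ v, pVS v = 1) (hVT1 : ∑ v, pVT v = 1) (hR1 : ∑ r, pR r = 1)
    (hYpos : ∀ y, 0 < pY y) (hApos : ∀ a, 0 < pA a)
    (hVSpos : ∀ v, 0 < pVS v) (hVTnn : ∀ v, 0 ≤ pVT v) (hRnn : ∀ r, 0 ≤ pR r)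
    (hgen1 : ∀ y a v r, ∑ x, gen y a v r x = 1) (hgennn : ∀ y a v r x, 0 ≤ gen y a v r x)
    -- strict conditional equalized odds in the source domain:
    (hfair : ∀ (v : 𝒱) (y : Bool),
      jointP pY pA pVS pR gen (fun y' a' v' _ x => y' = y ∧ a' = false ∧ v' = v ∧ f x = y) /
        jointP pY pA pVS pR gen (fun y' a' v' _ _ => y' = y ∧ a' = false ∧ v' = v)
      = jointP pY pA pVS pR gen (fun y' a' v' _ x => y' = y ∧ a' = true ∧ v' = v ∧ f x = y) /
        jointP pY pA pVS pR gen (fun y' a' v' _ _ => y' = y ∧ a' = true ∧ v' = v)) :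
    (∀ y : Bool,
      jointP pY pA pVT pR gen (fun y' a' _ _ x => y' = y ∧ a' = false ∧ f x = y) /
        jointP pY pA pVT pR gen (fun y' a' _ _ _ => y' = y ∧ a' = false)
      = jointP pY pA pVT pR gen (fun y' a' _ _ x => y' = y ∧ a' = true ∧ f x = y) /
        jointP pY pA pVT pR gen (fun y' a' _ _ _ => y' = y ∧ a' = true)) ∧
    (1 / 2) * ∑ y : Bool,
      |jointP pY pA pVT pR gen (fun y' a' _ _ x => y' = y ∧ a' = false ∧ f x = y) /
          jointP pY pA pVT pR gen (fun y' a' _ _ _ => y' = y ∧ a' = false)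
        - jointP pY pA pVT pR gen (fun y' a' _ _ x => y' = y ∧ a' = true ∧ f x = y) /
          jointP pY pA pVT pR gen (fun y' a' _ _ _ => y' = y ∧ a' = true)| = 0 := by
  -- the conditional acceptance probability given (y, a, v) is equal across groups
  have hq_eq : ∀ (y : Bool) (v : 𝒱),
      (∑ r, ∑ x, @ite ℝ (f x = y) (Classical.propDecidable _) (pR r * gen y false v r x) 0)
        = ∑ r, ∑ x, @ite ℝ (f x = y) (Classical.propDecidable _) (pR r * gen y true v r x) 0 := by
    intro y v
    have h := hfair v y
    rw [jointP_num4, jointP_num4, jointP_den3 _ _ _ _ _ _ _ _ hR1 hgen1,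
      jointP_den3 _ _ _ _ _ _ _ _ hR1 hgen1] at h
    have h0 : ∀ a : Bool, pY y * pA a * pVS v ≠ 0 := fun a =>
      (mul_pos (mul_pos (hYpos y) (hApos a)) (hVSpos v)).ne'
    rw [mul_div_cancel_left₀ _ (h0 false), mul_div_cancel_left₀ _ (h0 true)] at h
    exact h
  have hmain : ∀ y : Bool,
      jointP pY pA pVT pR gen (fun y' a' _ _ x => y' = y ∧ a' = false ∧ f x = y) /
        jointP pY pA pVT pR gen (fun y' a' _ _ _ => y' = y ∧ a' = false)
      = jointP pY pA pVT pR gen (fun y' a' _ _ x => y' = y ∧ a' = true ∧ f x = y) /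
        jointP pY pA pVT pR gen (fun y' a' _ _ _ => y' = y ∧ a' = true) := by
    intro y
    rw [jointP_num3, jointP_num3, jointP_den2 _ _ _ _ _ _ _ hR1 hgen1,
      jointP_den2 _ _ _ _ _ _ _ hR1 hgen1, hVT1]
    have h0 : ∀ a : Bool, pY y * pA a ≠ 0 := fun a =>
      (mul_pos (hYpos y) (hApos a)).ne'
    rw [mul_one, mul_one, mul_div_cancel_left₀ _ (h0 false), mul_div_cancel_left₀ _ (h0 true)]
    exact Finset.sum_congr rfl fun v _ => congrArg (fun t => pVT v * t) (hq_eq y v)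
  refine ⟨hmain, ?_⟩
  have : ∀ y : Bool,
      |jointP pY pA pVT pR gen (fun y' a' _ _ x => y' = y ∧ a' = false ∧ f x = y) /
          jointP pY pA pVT pR gen (fun y' a' _ _ _ => y' = y ∧ a' = false)
        - jointP pY pA pVT pR gen (fun y' a' _ _ x => y' = y ∧ a' = true ∧ f x = y) /
          jointP pY pA pVT pR gen (fun y' a' _ _ _ => y' = y ∧ a' = true)| = 0 := by
    intro y; rw [hmain y, sub_self, abs_zero]
  rw [Finset.sum_congr rfl fun y _ => this y, Finset.sum_const_zero, mul_zero]
end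

section
/- Assume for each group (a, y) the error bound ε_{a,y}(g) ≤ (2/(c−1))·ε_{a,y}(g_tc) + (2c/(c−1))·R_{a,y}(g) and the lower bound ε_{a,y}(g) ≥ ε_{a,y}(g_tc) − L_{a,y}(g, g_tc), with c > 3, teacher group-error disparities |ε_{a,y}(g_tc) − ε_{a',y'}(g_tc)| ≤ γ, and disagreements L_{a,y}(g, g_tc) ≤ μ. Then for each fixed y, |ε_{0,y}(g) − ε_{1,y}(g)| ≤ (2/(c−1))·(γ + μ + c·max_a R_{a,y}(g)). -/
lemma one_side (ea eb ta tb Ra La Lb c γ μ Rmax : ℝ)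
    (hc : 3 < c) (hta : 0 ≤ ta) (htb : 0 ≤ tb)
    (hup : ea ≤ (2 / (c - 1)) * ta + (2 * c / (c - 1)) * Ra)
    (hlo : tb - Lb ≤ eb)
    (hdisp : |ta - tb| ≤ γ)
    (hLb : Lb ≤ μ) (hμtb : μ ≤ tb) (hRa : Ra ≤ Rmax) :
    ea - eb ≤ (2 / (c - 1)) * (γ + μ + c * Rmax) := by
  have hc1 : (0:ℝ) < c - 1 := by linarith
  have hk : 2 / (c - 1) ≤ 1 := by
    rw [div_le_one hc1]; linarith
  have hk0 : 0 < 2 / (c - 1) := by positivity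
  have hd : ta - tb ≤ γ := (abs_le.mp hdisp).2
  have h1 : ea - eb ≤ (2 / (c - 1)) * ta + (2 * c / (c - 1)) * Ra - tb + Lb := by
    linarith
  have h2 : (2 * c / (c - 1)) * Ra ≤ (2 / (c - 1)) * (c * Rmax) := by
    have : (2 * c / (c - 1)) * Ra = (2 / (c - 1)) * (c * Ra) := by ring
    rw [this]
    apply mul_le_mul_of_nonneg_left _ (le_of_lt hk0)
    have : 0 < c := by linarith
    exact mul_le_mul_of_nonneg_left hRa this.le
  have h3 : μ - tb ≤ (2 / (c - 1)) * (μ - tb) := by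
    nlinarith [mul_le_mul_of_nonneg_right hk (sub_nonneg.mpr hμtb)]
  have h4 : (2 / (c - 1)) * ta - (2 / (c - 1)) * tb ≤ (2 / (c - 1)) * γ :=
    by nlinarith
  nlinarith

/-- Per-group error upper bounds in terms of the teacher error and
consistency loss, together with the lower bound from teacher disagreement, teacher
group-error disparity at most `γ` and disagreements at most `μ ≤ ε_tc`, imply that
for each label `y` the between-attribute error disparity is bounded by
`(2/(c−1))·(γ + μ + c·max_a R_{a,y})`. -/
theorem group_error_disparity_bound
    (ε εtc R L : Bool → Bool → ℝ) (c γ μ : ℝ)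
    (hc : 3 < c) (hγ : 0 ≤ γ) (hμ : 0 ≤ μ)
    (hεmem : ∀ a y, 0 ≤ ε a y ∧ ε a y ≤ 1)
    (hεtcmem : ∀ a y, 0 ≤ εtc a y ∧ εtc a y ≤ 1)
    (hRmem : ∀ a y, 0 ≤ R a y ∧ R a y ≤ 1)
    (hLmem : ∀ a y, 0 ≤ L a y ∧ L a y ≤ 1)
    (hupper : ∀ a y, ε a y ≤ (2 / (c - 1)) * εtc a y + (2 * c / (c - 1)) * R a y)
    (hlower : ∀ a y, εtc a y - L a y ≤ ε a y)
    (hdisp : ∀ a y a' y', |εtc a y - εtc a' y'| ≤ γ)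
    (hdis : ∀ a y, L a y ≤ μ)
    (hμε : ∀ a y, μ ≤ εtc a y) :
    ∀ y : Bool,
      |ε false y - ε true y|
        ≤ (2 / (c - 1)) * (γ + μ + c * max (R false y) (R true y)) := by
  intro y
  rw [abs_le]
  constructor
  · have := one_side (ε true y) (ε false y) (εtc true y) (εtc false y)
      (R true y) (L true y) (L false y) c γ μ (max (R false y) (R true y))
      hc (hεtcmem true y).1 (hεtcmem false y).1 (hupper true y) (hlower false y)
      (hdisp true y false y) (hdis false y) (hμε false y) (le_max_right _ _)
    linarith
  · exact one_side (ε false y) (ε true y) (εtc false y) (εtc true y)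
      (R false y) (L false y) (L true y) c γ μ (max (R false y) (R true y))
      hc (hεtcmem false y).1 (hεtcmem true y).1 (hupper false y) (hlower true y)
      (hdisp false y true y) (hdis true y) (hμε true y) (le_max_left _ _)
end

section
/- Under the per-group error bounds of the previous statement, the equalized-odds violation satisfies Δ_odds(g) = (1/2)(|ε_{0,0}(g) − ε_{1,0}(g)| + |ε_{0,1}(g) − ε_{1,1}(g)|) ≤ (2/(c−1))·(γ + μ + c·max_{a,y} R_{a,y}(g)). -/
/-- Under the per-group error bounds, the equalized-odds violation
`Δ_odds(g) = (1/2)(|ε_{0,0}−ε_{1,0}| + |ε_{0,1}−ε_{1,1}|)` is bounded by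
`(2/(c−1))·(γ + μ + c·max_{a,y} R_{a,y})`. -/
theorem equalized_odds_bound_from_group_error_bounds
    (ε εtc R L : Bool → Bool → ℝ) (c γ μ : ℝ)
    (hc : 3 < c) (hγ : 0 ≤ γ) (hμ : 0 ≤ μ)
    (hεmem : ∀ a y, 0 ≤ ε a y ∧ ε a y ≤ 1)
    (hεtcmem : ∀ a y, 0 ≤ εtc a y ∧ εtc a y ≤ 1)
    (hRmem : ∀ a y, 0 ≤ R a y ∧ R a y ≤ 1)
    (hupper : ∀ a y, ε a y ≤ (2 / (c - 1)) * εtc a y + (2 * c / (c - 1)) * R a y)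
    (hlower : ∀ a y, εtc a y - L a y ≤ ε a y)
    (hdisp : ∀ a y a' y', |εtc a y - εtc a' y'| ≤ γ)
    (hdis : ∀ a y, L a y ≤ μ)
    (hμε : ∀ a y, μ ≤ εtc a y) :
    (1 / 2) * (|ε false false - ε true false| + |ε false true - ε true true|)
      ≤ (2 / (c - 1)) *
        (γ + μ + c * max (max (R false false) (R false true))
                        (max (R true false) (R true true))) := by
  have hc1 : (0:ℝ) < c - 1 := by linarith
  set M := max (max (R false false) (R false true)) (max (R true false) (R true true)) with hM
  have hMle : ∀ a y, R a y ≤ M := by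
    intro a y
    cases a <;> cases y <;>
      simp [hM, le_max_iff, le_refl, le_max_left, le_max_right]
  have key : ∀ a a' y : Bool, ε a y - ε a' y ≤ (2 / (c - 1)) * (γ + μ + c * M) := by
    intro a a' y
    have h1 : (c - 1) * ε a y ≤ 2 * εtc a y + 2 * c * R a y := by
      have h := hupper a y
      rw [div_mul_eq_mul_div, div_mul_eq_mul_div, ← add_div, le_div_iff₀ hc1] at h
      linarith
    have h2 : εtc a' y - μ ≤ ε a' y := by
      have := hlower a' y; have := hdis a' y; linarith
    have h3 : εtc a y - εtc a' y ≤ γ := by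
      have := hdisp a y a' y; exact (abs_le.mp this).2
    have h4 : μ ≤ εtc a' y := hμε a' y
    have h5 : R a y ≤ M := hMle a y
    rw [div_mul_eq_mul_div, le_div_iff₀ hc1]
    nlinarith [hεmem a y, hεmem a' y, (hεtcmem a' y).1]
  have habs : ∀ y : Bool, |ε false y - ε true y| ≤ (2 / (c - 1)) * (γ + μ + c * M) := by
    intro y
    rw [abs_le]
    constructor
    · have := key true false y; linarith
    · exact key false true y
  have h0 := habs false
  have h1 := habs true
  linarith
end

section
/- Let a, b, a', b' be real numbers with lower bounds a ≥ ā − μ, b ≥ b̄ − μ and upper bounds a ≤ (2/(c−1))·ā + (2c/(c−1))·r_a, b ≤ (2/(c−1))·b̄ + (2c/(c−1))·r_b, where |ā − b̄| ≤ γ, μ, γ, r_a, r_b ≥ 0, c > 3, and μ ≤ min{ā, b̄}. Then |a − b| ≤ (2/(c−1))·(γ + μ + c·max{r_a, r_b}). -/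
/-- Purely real-number inequality behind the group-error disparity
bound: given lower bounds `a ≥ ā − μ`, `b ≥ b̄ − μ`, upper bounds
`a ≤ (2/(c−1))·ā + (2c/(c−1))·r_a`, `b ≤ (2/(c−1))·b̄ + (2c/(c−1))·r_b`,
`|ā − b̄| ≤ γ`, `μ ≤ min{ā, b̄}`, nonnegativity and `c > 3`, we get
`|a − b| ≤ (2/(c−1))·(γ + μ + c·max{r_a, r_b})`. -/
theorem abstract_disparity_bound
    (a b abar bbar ra rb γ μ c : ℝ)
    (habar : 0 ≤ abar) (hbbar : 0 ≤ bbar)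
    (hra : 0 ≤ ra) (hrb : 0 ≤ rb) (hγ : 0 ≤ γ) (hμ : 0 ≤ μ)
    (hc : 3 < c)
    (hlowa : abar - μ ≤ a) (hlowb : bbar - μ ≤ b)
    (hupa : a ≤ (2 / (c - 1)) * abar + (2 * c / (c - 1)) * ra)
    (hupb : b ≤ (2 / (c - 1)) * bbar + (2 * c / (c - 1)) * rb)
    (hdisp : |abar - bbar| ≤ γ)
    (hμmin : μ ≤ min abar bbar) :
    |a - b| ≤ (2 / (c - 1)) * (γ + μ + c * max ra rb) := by
  have hc1 : (0:ℝ) < c - 1 := by linarith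
  have hc1 : (0:ℝ) < c - 1 := by linarith
  have h1 : abar - bbar ≤ γ := (abs_le.mp hdisp).2
  have h2 : bbar - abar ≤ γ := by have := (abs_le.mp hdisp).1; linarith
  have hμa : μ ≤ abar := le_trans hμmin (min_le_left _ _)
  have hμb : μ ≤ bbar := le_trans hμmin (min_le_right _ _)
  have hupa' : a * (c - 1) ≤ 2 * abar + 2 * c * ra := by
    rw [div_mul_eq_mul_div, div_mul_eq_mul_div, ← add_div, le_div_iff₀ hc1] at hupa
    linarith [hupa]
  have hupb' : b * (c - 1) ≤ 2 * bbar + 2 * c * rb := by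
    rw [div_mul_eq_mul_div, div_mul_eq_mul_div, ← add_div, le_div_iff₀ hc1] at hupb
    linarith [hupb]
  rw [abs_le]
  constructor
  · rw [div_mul_eq_mul_div, neg_le, le_div_iff₀ hc1]
    nlinarith [mul_nonneg (by linarith : (0:ℝ) ≤ c - 3) (by linarith : (0:ℝ) ≤ abar - μ),
      mul_le_mul_of_nonneg_left (le_max_right ra rb) (by linarith : (0:ℝ) ≤ 2 * c),
      mul_le_mul_of_nonneg_right hlowa hc1.le]
  · rw [div_mul_eq_mul_div, le_div_iff₀ hc1]
    nlinarith [mul_nonneg (by linarith : (0:ℝ) ≤ c - 3) (by linarith : (0:ℝ) ≤ bbar - μ),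
      mul_le_mul_of_nonneg_left (le_max_left ra rb) (by linarith : (0:ℝ) ≤ 2 * c),
      mul_le_mul_of_nonneg_right hlowb hc1.le]
end

section
/- If a set of real numbers {e_{a,y} : a,y ∈ {0,1}} satisfies e_{a,y} = (2/(c−1))·t_{a,y} + (2c/(c−1))·r_{a,y} where |t_{a,y} − t_{a',y'}| ≤ γ for all pairs, then the variance of {e_{a,y}} is at most 2·((2/(c−1))²·γ² + (2c/(c−1))²·Var({r_{a,y}})) + (8c/(c−1)²)·γ·(max r − min r); in particular, if γ = 0 then Var({e_{a,y}}) = (2c/(c−1))²·Var({r_{a,y}}). -/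
/-- Population variance of the four reals `{x a y : a, y ∈ Bool}`. -/
noncomputable def var4 (x : Bool → Bool → ℝ) : ℝ :=
  (1 / 4) * ∑ a : Bool, ∑ y : Bool,
    (x a y - (1 / 4) * ∑ a' : Bool, ∑ y' : Bool, x a' y') ^ 2

/-- variance of four reals in mean form -/
noncomputable def V4 (x0 x1 x2 x3 : ℝ) : ℝ :=
  (1/4) * ((x0 - (1/4)*(x0+x1+x2+x3))^2 + (x1 - (1/4)*(x0+x1+x2+x3))^2
    + (x2 - (1/4)*(x0+x1+x2+x3))^2 + (x3 - (1/4)*(x0+x1+x2+x3))^2)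

set_option maxHeartbeats 2000000 in
lemma scalar_bound (α β γ D t0 t1 t2 t3 r0 r1 r2 r3 : ℝ)
    (hα : 0 ≤ α) (hβ : 0 ≤ β) (hγ : 0 ≤ γ) (hD : 0 ≤ D)
    (ht01 : |t0 - t1| ≤ γ) (ht02 : |t0 - t2| ≤ γ) (ht03 : |t0 - t3| ≤ γ)
    (ht12 : |t1 - t2| ≤ γ) (ht13 : |t1 - t3| ≤ γ) (ht23 : |t2 - t3| ≤ γ)
    (hr01 : |r0 - r1| ≤ D) (hr02 : |r0 - r2| ≤ D) (hr03 : |r0 - r3| ≤ D)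
    (hr12 : |r1 - r2| ≤ D) (hr13 : |r1 - r3| ≤ D) (hr23 : |r2 - r3| ≤ D) :
    V4 (α*t0+β*r0) (α*t1+β*r1) (α*t2+β*r2) (α*t3+β*r3)
      ≤ 2 * (α^2 * γ^2 + β^2 * V4 r0 r1 r2 r3) + 2*α*β*γ*D := by
  obtain ⟨a01, b01⟩ := abs_le.mp ht01
  obtain ⟨a02, b02⟩ := abs_le.mp ht02
  obtain ⟨a03, b03⟩ := abs_le.mp ht03
  obtain ⟨a12, b12⟩ := abs_le.mp ht12
  obtain ⟨a13, b13⟩ := abs_le.mp ht13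
  obtain ⟨a23, b23⟩ := abs_le.mp ht23
  obtain ⟨c01, d01⟩ := abs_le.mp hr01
  obtain ⟨c02, d02⟩ := abs_le.mp hr02
  obtain ⟨c03, d03⟩ := abs_le.mp hr03
  obtain ⟨c12, d12⟩ := abs_le.mp hr12
  obtain ⟨c13, d13⟩ := abs_le.mp hr13
  obtain ⟨c23, d23⟩ := abs_le.mp hr23
  have hαβ : 0 ≤ α*β := mul_nonneg hα hβ
  have hsq : 0 ≤ α^2 := sq_nonneg α
  simp only [V4]
  linarith [mul_nonneg hsq (mul_nonneg (by linarith : (0:ℝ) ≤ γ - (t0-t1)) (by linarith : (0:ℝ) ≤ γ + (t0-t1))),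
    mul_nonneg hsq (mul_nonneg (by linarith : (0:ℝ) ≤ γ - (t0-t2)) (by linarith : (0:ℝ) ≤ γ + (t0-t2))),
    mul_nonneg hsq (mul_nonneg (by linarith : (0:ℝ) ≤ γ - (t0-t3)) (by linarith : (0:ℝ) ≤ γ + (t0-t3))),
    mul_nonneg hsq (mul_nonneg (by linarith : (0:ℝ) ≤ γ - (t1-t2)) (by linarith : (0:ℝ) ≤ γ + (t1-t2))),
    mul_nonneg hsq (mul_nonneg (by linarith : (0:ℝ) ≤ γ - (t1-t3)) (by linarith : (0:ℝ) ≤ γ + (t1-t3))),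
    mul_nonneg hsq (mul_nonneg (by linarith : (0:ℝ) ≤ γ - (t2-t3)) (by linarith : (0:ℝ) ≤ γ + (t2-t3))),
    mul_nonneg hαβ (mul_nonneg (by linarith : (0:ℝ) ≤ γ - (t0-t1)) (by linarith : (0:ℝ) ≤ D + (r0-r1))),
    mul_nonneg hαβ (mul_nonneg (by linarith : (0:ℝ) ≤ γ + (t0-t1)) (by linarith : (0:ℝ) ≤ D - (r0-r1))),
    mul_nonneg hαβ (mul_nonneg (by linarith : (0:ℝ) ≤ γ - (t0-t2)) (by linarith : (0:ℝ) ≤ D + (r0-r2))),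
    mul_nonneg hαβ (mul_nonneg (by linarith : (0:ℝ) ≤ γ + (t0-t2)) (by linarith : (0:ℝ) ≤ D - (r0-r2))),
    mul_nonneg hαβ (mul_nonneg (by linarith : (0:ℝ) ≤ γ - (t0-t3)) (by linarith : (0:ℝ) ≤ D + (r0-r3))),
    mul_nonneg hαβ (mul_nonneg (by linarith : (0:ℝ) ≤ γ + (t0-t3)) (by linarith : (0:ℝ) ≤ D - (r0-r3))),
    mul_nonneg hαβ (mul_nonneg (by linarith : (0:ℝ) ≤ γ - (t1-t2)) (by linarith : (0:ℝ) ≤ D + (r1-r2))),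
    mul_nonneg hαβ (mul_nonneg (by linarith : (0:ℝ) ≤ γ + (t1-t2)) (by linarith : (0:ℝ) ≤ D - (r1-r2))),
    mul_nonneg hαβ (mul_nonneg (by linarith : (0:ℝ) ≤ γ - (t1-t3)) (by linarith : (0:ℝ) ≤ D + (r1-r3))),
    mul_nonneg hαβ (mul_nonneg (by linarith : (0:ℝ) ≤ γ + (t1-t3)) (by linarith : (0:ℝ) ≤ D - (r1-r3))),
    mul_nonneg hαβ (mul_nonneg (by linarith : (0:ℝ) ≤ γ - (t2-t3)) (by linarith : (0:ℝ) ≤ D + (r2-r3))),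
    mul_nonneg hαβ (mul_nonneg (by linarith : (0:ℝ) ≤ γ + (t2-t3)) (by linarith : (0:ℝ) ≤ D - (r2-r3))),
    mul_nonneg (mul_nonneg hαβ hγ) hD,
    sq_nonneg (α*γ),
    sq_nonneg (β*(r0-r1)), sq_nonneg (β*(r0-r2)), sq_nonneg (β*(r0-r3)),
    sq_nonneg (β*(r1-r2)), sq_nonneg (β*(r1-r3)), sq_nonneg (β*(r2-r3))]

lemma var4_eq (x : Bool → Bool → ℝ) :
    var4 x = V4 (x false false) (x false true) (x true false) (x true true) := by
  simp [var4, V4, Fintype.sum_bool]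
  ring

lemma V4_shift (k b r0 r1 r2 r3 : ℝ) :
    V4 (k + b*r0) (k + b*r1) (k + b*r2) (k + b*r3) = b^2 * V4 r0 r1 r2 r3 := by
  simp only [V4]; ring

/-- If `e_{a,y} = (2/(c−1))·t_{a,y} + (2c/(c−1))·r_{a,y}` where the
teacher errors `t` have pairwise disparity at most `γ`, then
`Var(e) ≤ 2((2/(c−1))²γ² + (2c/(c−1))²·Var(r)) + (8c/(c−1)²)·γ·(max r − min r)`;
in particular, when `γ = 0`, `Var(e) = (2c/(c−1))²·Var(r)`. -/
theorem variance_of_group_errors_bound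
    (e t r : Bool → Bool → ℝ) (c γ : ℝ)
    (hc : 1 < c) (hγ : 0 ≤ γ)
    (ht : ∀ a y, 0 ≤ t a y ∧ t a y ≤ 1)
    (hr : ∀ a y, 0 ≤ r a y ∧ r a y ≤ 1)
    (he : ∀ a y, e a y = (2 / (c - 1)) * t a y + (2 * c / (c - 1)) * r a y)
    (hdisp : ∀ a y a' y', |t a y - t a' y'| ≤ γ) :
    var4 e
      ≤ 2 * ((2 / (c - 1)) ^ 2 * γ ^ 2 + (2 * c / (c - 1)) ^ 2 * var4 r)
        + (8 * c / (c - 1) ^ 2) * γ *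
          (max (max (r false false) (r false true)) (max (r true false) (r true true))
            - min (min (r false false) (r false true)) (min (r true false) (r true true))) ∧
    (γ = 0 → var4 e = (2 * c / (c - 1)) ^ 2 * var4 r) := by
  have hc1 : (0:ℝ) < c - 1 := by linarith
  set α := 2 / (c - 1) with hαdef
  set β := 2 * c / (c - 1) with hβdef
  have hα : 0 ≤ α := by positivity
  have hβ : 0 ≤ β := by positivity
  set M := max (max (r false false) (r false true)) (max (r true false) (r true true)) with hM
  set m := min (min (r false false) (r false true)) (min (r true false) (r true true)) with hm
  have hMub : ∀ a y, r a y ≤ M := by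
    intro a y; cases a <;> cases y <;>
      simp [hM, le_max_iff, le_refl, true_or, or_true]
  have hmlb : ∀ a y, m ≤ r a y := by
    intro a y; cases a <;> cases y <;>
      simp [hm, min_le_iff, le_refl, true_or, or_true]
  have hD : 0 ≤ M - m := by have := hMub false false; have := hmlb false false; linarith
  have hrd : ∀ a y a' y', |r a y - r a' y'| ≤ M - m := by
    intro a y a' y'
    rw [abs_le]
    constructor
    · have := hMub a' y'; have := hmlb a y; linarith
    · have := hMub a y; have := hmlb a' y'; linarith
  have hE : var4 e = V4 (α * t false false + β * r false false)
      (α * t false true + β * r false true)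
      (α * t true false + β * r true false)
      (α * t true true + β * r true true) := by
    rw [var4_eq]
    rw [he false false, he false true, he true false, he true true]
  have key := scalar_bound α β γ (M - m)
      (t false false) (t false true) (t true false) (t true true)
      (r false false) (r false true) (r true false) (r true true)
      hα hβ hγ hD
      (hdisp _ _ _ _) (hdisp _ _ _ _) (hdisp _ _ _ _)
      (hdisp _ _ _ _) (hdisp _ _ _ _) (hdisp _ _ _ _)
      (hrd _ _ _ _) (hrd _ _ _ _) (hrd _ _ _ _)
      (hrd _ _ _ _) (hrd _ _ _ _) (hrd _ _ _ _)
  constructor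
  · have hconst : 8 * c / (c - 1) ^ 2 * γ * (M - m) = 2 * α * β * γ * (M - m) := by
      rw [hαdef, hβdef]; field_simp; ring
    rw [hE, var4_eq r, hconst]
    exact key
  · intro h0
    subst h0
    have hteq : ∀ a y, t a y = t false false := by
      intro a y
      have h := hdisp a y false false
      have h2 := abs_nonneg (t a y - t false false)
      have : |t a y - t false false| = 0 := le_antisymm h h2
      have := abs_eq_zero.mp this
      linarith
    rw [hE, var4_eq r, hteq false true, hteq true false, hteq true true]
    exact V4_shift (α * t false false) β _ _ _ _
end

section
/- In the multi-class, multi-sensitive-attribute setting, define Δ_odds(g) = (1/|𝒴|) Σ_{y∈𝒴} max_{a,a'∈𝒜} |ε_{U_a^y}(g) − ε_{U_{a'}^y}(g)|. If for every group (a,y), the bounds ε_{U_a^y}(g) ≤ (2/(c−1))·ε_{U_a^y}(g_tc) + (2c/(c−1))·R_{U_a^y}(g) and ε_{U_a^y}(g) ≥ ε_{U_a^y}(g_tc) − μ hold, with teacher disparity |ε_{U_a^y}(g_tc) − ε_{U_{a'}^{y'}}(g_tc)| ≤ γ, disagreement bound μ ≤ min_{a,y} ε_{U_a^y}(g_tc),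 and c > 3, then Δ_odds(g) ≤ (2/(c−1))·(γ + μ + c·max_{a,y} R_{U_a^y}(g)). -/
open Finset

/-! The student's error gap on a class `y` is at most the teacher's gap, shrunk by the factor
`k = 2/(c-1) < 1`, plus the consistency term and the slack `μ`: the factor `k - 1 ≤ 0` in front
of the teacher's error of the better group is absorbed by the assumption `μ ≤ ε_tc`. This bound
is uniform in the class, so it survives both the maximum over attribute pairs and the average
over classes. -/

lemma sub_le_of_teacher_bounds {x x' t t' s k γ μ : ℝ} (hk₀ : 0 ≤ k) (hk₁ : k ≤ 1)
    (hx : x ≤ k * t + s) (hx' : t' - μ ≤ x') (hgap : t - t' ≤ γ) (hμ : μ ≤ t') :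
    x - x' ≤ k * (γ + μ) + s := by
  have hkt : k * t ≤ k * (t' + γ) := mul_le_mul_of_nonneg_left (by linarith) hk₀
  have hshrink : (k - 1) * t' ≤ (k - 1) * μ := mul_le_mul_of_nonpos_left hμ (by linarith)
  linarith

lemma iSup_iSup_abs_sub_le {ι : Type*} [Nonempty ι] {f : ι → ℝ} {B : ℝ}
    (h : ∀ i j, f i - f j ≤ B) : ⨆ i, ⨆ j, |f i - f j| ≤ B :=
  ciSup_le fun i ↦ ciSup_le fun j ↦ abs_sub_le_iff.mpr ⟨h i j, h j i⟩

lemma one_div_card_mul_sum_le {ι : Type*} [Fintype ι] [Nonempty ι] {f : ι → ℝ} {B : ℝ}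
    (h : ∀ i, f i ≤ B) : 1 / (Fintype.card ι : ℝ) * ∑ i, f i ≤ B := by
  rw [one_div_mul_eq_div, ← Fintype.expect_eq_sum_div_card]
  exact expect_le univ_nonempty fun i _ ↦ h i

theorem multiclass_equalized_odds_bound_general
    {𝒜 𝒴 : Type*} [Fintype 𝒜] [Fintype 𝒴] [Nonempty 𝒜] [Nonempty 𝒴]
    (ε εtc R : 𝒜 → 𝒴 → ℝ) (c γ μ : ℝ)
    (hc : 3 < c)
    (hupper : ∀ a y, ε a y ≤ (2 / (c - 1)) * εtc a y + (2 * c / (c - 1)) * R a y)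
    (hlower : ∀ a y, εtc a y - μ ≤ ε a y)
    (hdisp : ∀ a y a' y', |εtc a y - εtc a' y'| ≤ γ)
    (hμε : ∀ a y, μ ≤ εtc a y) :
    (1 / (Fintype.card 𝒴 : ℝ)) *
        ∑ y : 𝒴, (⨆ a : 𝒜, ⨆ a' : 𝒜, |ε a y - ε a' y|)
      ≤ (2 / (c - 1)) * (γ + μ + c * ⨆ a : 𝒜, ⨆ y : 𝒴, R a y) := by
  set k := 2 / (c - 1)
  set Rmax := ⨆ a : 𝒜, ⨆ y : 𝒴, R a y
  have hk₀ : 0 ≤ k := div_nonneg zero_le_two (by linarith)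
  have hk₁ : k ≤ 1 := (div_le_one (by linarith)).mpr (by linarith)
  have hR : ∀ a y, R a y ≤ Rmax := fun a y ↦
    Finite.le_ciSup_of_le a (Finite.le_ciSup (R a) y)
  have hgap : ∀ y a a', ε a y - ε a' y ≤ k * (γ + μ + c * Rmax) := fun y a a' ↦ by
    have hcons : 2 * c / (c - 1) * R a y ≤ k * c * Rmax := by
      rw [mul_div_right_comm]
      exact mul_le_mul_of_nonneg_left (hR a y) (mul_nonneg hk₀ (by linarith))
    have := sub_le_of_teacher_bounds hk₀ hk₁ (hupper a y) (hlower a' y)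
      (abs_sub_le_iff.mp (hdisp a y a' y)).1 (hμε a' y)
    linarith
  exact one_div_card_mul_sum_le fun y ↦ iSup_iSup_abs_sub_le (hgap y)

/-- Multi-class, multi-sensitive-attribute generalization. With
`Δ_odds(g) = (1/|𝒴|) Σ_y max_{a,a'} |ε_{a,y}(g) − ε_{a',y}(g)|`, per-group upper
bounds via the teacher and consistency losses, lower bounds `ε ≥ ε_tc − μ`,
teacher disparity at most `γ`, `μ ≤ min ε_tc` and `c > 3` give
`Δ_odds(g) ≤ (2/(c−1))·(γ + μ + c·max_{a,y} R_{a,y}(g))`. -/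
theorem multiclass_equalized_odds_bound
    {𝒜 𝒴 : Type*} [Fintype 𝒜] [Fintype 𝒴] [Nonempty 𝒜] [Nonempty 𝒴]
    (ε εtc R : 𝒜 → 𝒴 → ℝ) (c γ μ : ℝ)
    (hc : 3 < c) (hγ : 0 ≤ γ) (hμ : 0 ≤ μ)
    (hεmem : ∀ a y, 0 ≤ ε a y ∧ ε a y ≤ 1)
    (hεtcmem : ∀ a y, 0 ≤ εtc a y ∧ εtc a y ≤ 1)
    (hRmem : ∀ a y, 0 ≤ R a y ∧ R a y ≤ 1)
    (hupper : ∀ a y, ε a y ≤ (2 / (c - 1)) * εtc a y + (2 * c / (c - 1)) * R a y)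
    (hlower : ∀ a y, εtc a y - μ ≤ ε a y)
    (hdisp : ∀ a y a' y', |εtc a y - εtc a' y'| ≤ γ)
    (hμε : ∀ a y, μ ≤ εtc a y) :
    (1 / (Fintype.card 𝒴 : ℝ)) *
        ∑ y : 𝒴, (⨆ a : 𝒜, ⨆ a' : 𝒜, |ε a y - ε a' y|)
      ≤ (2 / (c - 1)) * (γ + μ + c * ⨆ a : 𝒜, ⨆ y : 𝒴, R a y) :=
  multiclass_equalized_odds_bound_general ε εtc R c γ μ hc hupper hlower hdisp hμε
end
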